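/- arXiv:1807.01959 — 2 statements merged into one kernel-verified Lean document; each statement's English description precedes it below -/
import Mathlib

section
/- Let v be a C^∞ vector field on ℝ^N and f : ℝ^N → ℝ a C^∞ function with ∑_i v^i ∂f/∂x^i = 0 everywhere. Then f∘q and l_df are Casimir functions for the bivector field v_C ∧ v_V on ℝ^N × ℝ^N. -/
open scoped BigOperators

/-- Partial derivative of `f : ℝ^N → ℝ` in the `s`-th coordinate direction. -/
noncomputable def pd {N : ℕ} (f : (Fin N → ℝ) → ℝ) (s : Fin N) (x : Fin N → ℝ) : ℝ :=
  fderiv ℝ f x (Pi.single s 1)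

/-- Coordinate direction on `ℝ^N × ℝ^N` indexed by `Fin N ⊕ Fin N`. -/
noncomputable def dir (N : ℕ) (a : Fin N ⊕ Fin N) : (Fin N → ℝ) × (Fin N → ℝ) :=
  Sum.elim (fun i => (Pi.single i 1, 0)) (fun i => (0, Pi.single i 1)) a

/-- Partial derivative on `ℝ^N × ℝ^N` in the `a`-th coordinate direction. -/
noncomputable def pdT {N : ℕ} (F : (Fin N → ℝ) × (Fin N → ℝ) → ℝ)
    (a : Fin N ⊕ Fin N) (z : (Fin N → ℝ) × (Fin N → ℝ)) : ℝ :=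
  fderiv ℝ F z (dir N a)

/-- `π` is a Poisson tensor on `ℝ^N`: a smooth antisymmetric bivector field
satisfying the Jacobi identity. -/
def IsPoisson {N : ℕ} (π : (Fin N → ℝ) → Matrix (Fin N) (Fin N) ℝ) : Prop :=
  (∀ i j, ContDiff ℝ (⊤ : ℕ∞) fun x => π x i j) ∧
  (∀ x i j, π x j i = - π x i j) ∧
  (∀ x i j k, ∑ s, (π x i s * pd (fun x => π x j k) s x
      + π x j s * pd (fun x => π x k i) s x
      + π x k s * pd (fun x => π x i j) s x) = 0)

/-- `v` is a (smooth) Poisson vector field for `π` (i.e. `L_v π = 0`). -/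
def IsPoissonVF {N : ℕ} (π : (Fin N → ℝ) → Matrix (Fin N) (Fin N) ℝ)
    (v : (Fin N → ℝ) → Fin N → ℝ) : Prop :=
  (∀ i, ContDiff ℝ (⊤ : ℕ∞) fun x => v x i) ∧
  (∀ x i j, ∑ s, (pd (fun x => π x i j) s x * v x s
      - π x s j * pd (fun x => v x i) s x
      - π x i s * pd (fun x => v x j) s x) = 0)

/-- The tangent lift `π_TM` of `π` to `ℝ^N × ℝ^N`. -/
noncomputable def tlift {N : ℕ} (π : (Fin N → ℝ) → Matrix (Fin N) (Fin N) ℝ)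
    (z : (Fin N → ℝ) × (Fin N → ℝ)) : Matrix (Fin N ⊕ Fin N) (Fin N ⊕ Fin N) ℝ :=
  Matrix.of fun a b =>
    match a, b with
    | Sum.inl _, Sum.inl _ => 0
    | Sum.inl i, Sum.inr j => π z.1 i j
    | Sum.inr i, Sum.inl j => π z.1 i j
    | Sum.inr i, Sum.inr j => ∑ s, pd (fun x => π x i j) s z.1 * z.2 s

/-- The complete lift `v_C` of a vector field `v`. -/
noncomputable def liftC {N : ℕ} (v : (Fin N → ℝ) → Fin N → ℝ)
    (z : (Fin N → ℝ) × (Fin N → ℝ)) : Fin N ⊕ Fin N → ℝ :=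
  Sum.elim (fun i => v z.1 i) (fun i => ∑ s, pd (fun x => v x i) s z.1 * z.2 s)

/-- The vertical lift `v_V` of a vector field `v`. -/
def liftV {N : ℕ} (v : (Fin N → ℝ) → Fin N → ℝ)
    (z : (Fin N → ℝ) × (Fin N → ℝ)) : Fin N ⊕ Fin N → ℝ :=
  Sum.elim (fun _ => 0) (fun i => v z.1 i)

/-- The wedge `u ∧ w` of two vector fields, as a bivector field. -/
def wedge {Z ι : Type*} (u w : Z → ι → ℝ) (z : Z) : Matrix ι ι ℝ :=
  Matrix.of fun a b => u z a * w z b - u z b * w z a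

/-- A Poisson tensor on `ℝ^N × ℝ^N`: a smooth antisymmetric bivector field
satisfying the Jacobi identity. -/
def IsPoissonT {N : ℕ}
    (P : (Fin N → ℝ) × (Fin N → ℝ) → Matrix (Fin N ⊕ Fin N) (Fin N ⊕ Fin N) ℝ) : Prop :=
  (∀ a b, ContDiff ℝ (⊤ : ℕ∞) fun z => P z a b) ∧
  (∀ z a b, P z b a = - P z a b) ∧
  (∀ z a b c, ∑ s, (P z a s * pdT (fun z => P z b c) s z
      + P z b s * pdT (fun z => P z c a) s z
      + P z c s * pdT (fun z => P z a b) s z) = 0)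

/-- `c` is a Casimir function for `π` on `ℝ^N`. -/
def IsCasimir {N : ℕ} (π : (Fin N → ℝ) → Matrix (Fin N) (Fin N) ℝ)
    (c : (Fin N → ℝ) → ℝ) : Prop :=
  ContDiff ℝ (⊤ : ℕ∞) c ∧ ∀ x j, ∑ i, pd c i x * π x i j = 0

/-- `F` is a Casimir function for the bivector field `P` on `ℝ^N × ℝ^N`. -/
def IsCasimirT {N : ℕ}
    (P : (Fin N → ℝ) × (Fin N → ℝ) → Matrix (Fin N ⊕ Fin N) (Fin N ⊕ Fin N) ℝ)
    (F : (Fin N → ℝ) × (Fin N → ℝ) → ℝ) : Prop :=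
  ∀ z b, ∑ a, pdT F a z * P z a b = 0

/-- `f ∘ q : ℝ^N × ℝ^N → ℝ`. -/
def fq {N : ℕ} (f : (Fin N → ℝ) → ℝ) (z : (Fin N → ℝ) × (Fin N → ℝ)) : ℝ := f z.1

/-- The fiber-wise linear function `l_{df}` on `ℝ^N × ℝ^N`. -/
noncomputable def ldf {N : ℕ} (f : (Fin N → ℝ) → ℝ) (z : (Fin N → ℝ) × (Fin N → ℝ)) : ℝ :=
  ∑ s, pd f s z.1 * z.2 s

/-- The commutator `[v,w]` of two vector fields on `ℝ^N`. -/
noncomputable def vbr {N : ℕ} (v w : (Fin N → ℝ) → Fin N → ℝ)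
    (x : Fin N → ℝ) (i : Fin N) : ℝ :=
  ∑ s, (v x s * pd (fun x => w x i) s x - w x s * pd (fun x => v x i) s x)

section casimirHelpers
variable {N : ℕ}

lemma pd_contDiff' {f : (Fin N → ℝ) → ℝ} (hf : ContDiff ℝ (⊤ : ℕ∞) f) (s : Fin N) :
    ContDiff ℝ (⊤ : ℕ∞) (pd f s) :=
  (hf.fderiv_right (m := (⊤ : ℕ∞)) (by simp)).clm_apply contDiff_const

lemma pd_fderiv_apply' {f : (Fin N → ℝ) → ℝ} (hf : ContDiff ℝ (⊤ : ℕ∞) f) (s i : Fin N)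
    (x : Fin N → ℝ) :
    pd (pd f s) i x = fderiv ℝ (fderiv ℝ f) x (Pi.single i 1) (Pi.single s 1) := by
  have hdf : DifferentiableAt ℝ (fderiv ℝ f) x :=
    ((hf.fderiv_right (m := (⊤ : ℕ∞)) (by simp)).differentiable (by simp)) x
  have h : HasFDerivAt (fun y => fderiv ℝ f y (Pi.single s 1))
      ((ContinuousLinearMap.apply ℝ ℝ (Pi.single s 1 : Fin N → ℝ)).comp
        (fderiv ℝ (fderiv ℝ f) x)) x :=
    (ContinuousLinearMap.apply ℝ ℝ (Pi.single s 1 : Fin N → ℝ)).hasFDerivAt.comp x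
      hdf.hasFDerivAt
  have h2 : fderiv ℝ (pd f s) x
      = ((ContinuousLinearMap.apply ℝ ℝ (Pi.single s 1 : Fin N → ℝ)).comp
        (fderiv ℝ (fderiv ℝ f) x)) := h.fderiv
  simp only [pd]
  rw [h2]
  rfl

lemma pd_pd_symm' {f : (Fin N → ℝ) → ℝ} (hf : ContDiff ℝ (⊤ : ℕ∞) f) (s i : Fin N) (x : Fin N → ℝ) :
    pd (pd f s) i x = pd (pd f i) s x := by
  rw [pd_fderiv_apply' hf, pd_fderiv_apply' hf]
  exact (hf.contDiffAt.isSymmSndFDerivAt (by rw [minSmoothness_of_isRCLikeNormedField]; exact (WithTop.coe_le_coe.mpr (le_top : (2:ℕ∞) ≤ ⊤) : ((2:ℕ∞) : WithTop ℕ∞) ≤ _))) _ _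

end casimirHelpers

/-- if `v(f) = 0` then `f∘q` and `l_df` are Casimir functions for
the bivector field `v_C ∧ v_V` on `ℝ^N × ℝ^N`. -/
theorem fq_ldf_casimir_wedge_liftC_liftV {N : ℕ}
    (v : (Fin N → ℝ) → Fin N → ℝ) (f : (Fin N → ℝ) → ℝ)
    (hv : ∀ i, ContDiff ℝ (⊤ : ℕ∞) fun x => v x i) (hf : ContDiff ℝ (⊤ : ℕ∞) f)
    (hvf : ∀ x, ∑ i, v x i * pd f i x = 0) :
    IsCasimirT (wedge (liftC v) (liftV v)) (fq f) ∧
    IsCasimirT (wedge (liftC v) (liftV v)) (ldf f) := by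
  have hfd : Differentiable ℝ f := hf.differentiable (by simp)
  have hpdf : ∀ s, ContDiff ℝ (⊤ : ℕ∞) (pd f s) := fun s => pd_contDiff' hf s
  have hvf' : ∀ x, ∑ i, pd f i x * v x i = 0 := by
    intro x
    rw [← hvf x]
    exact Finset.sum_congr rfl fun i _ => mul_comm _ _
  -- computation of pdT (fq f)
  have hfq : ∀ z : (Fin N → ℝ) × (Fin N → ℝ), ∀ a,
      pdT (fq f) a z = Sum.elim (fun i => pd f i z.1) (fun _ => (0:ℝ)) a := by
    intro z a
    have h : HasFDerivAt (fq f)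
        ((fderiv ℝ f z.1).comp (ContinuousLinearMap.fst ℝ (Fin N → ℝ) (Fin N → ℝ))) z :=
      (hfd z.1).hasFDerivAt.comp z hasFDerivAt_fst
    rw [pdT, h.fderiv]
    cases a with
    | inl i => simp [dir, pd]
    | inr i => simp [dir]
  -- computation of pdT (ldf f)
  have hldf : ∀ z : (Fin N → ℝ) × (Fin N → ℝ), ∀ a,
      pdT (ldf f) a z = Sum.elim
        (fun i => ∑ s, pd (pd f s) i z.1 * z.2 s) (fun i => pd f i z.1) a := by
    intro z a
    have hterm : ∀ s : Fin N,
        HasFDerivAt (fun z : (Fin N → ℝ) × (Fin N → ℝ) => pd f s z.1 * z.2 s)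
        (pd f s z.1 • ((ContinuousLinearMap.proj s).comp
            (ContinuousLinearMap.snd ℝ (Fin N → ℝ) (Fin N → ℝ)))
          + z.2 s • ((fderiv ℝ (pd f s) z.1).comp
            (ContinuousLinearMap.fst ℝ (Fin N → ℝ) (Fin N → ℝ)))) z := by
      intro s
      have h1 : HasFDerivAt (fun z : (Fin N → ℝ) × (Fin N → ℝ) => pd f s z.1)
          ((fderiv ℝ (pd f s) z.1).comp
            (ContinuousLinearMap.fst ℝ (Fin N → ℝ) (Fin N → ℝ))) z :=
        (((hpdf s).differentiable (by simp)) z.1).hasFDerivAt.comp z hasFDerivAt_fst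
      have h2 : HasFDerivAt (fun z : (Fin N → ℝ) × (Fin N → ℝ) => z.2 s)
          ((ContinuousLinearMap.proj s).comp
            (ContinuousLinearMap.snd ℝ (Fin N → ℝ) (Fin N → ℝ))) z :=
        ((ContinuousLinearMap.proj (R := ℝ) (φ := fun _ : Fin N => ℝ) s).comp
            (ContinuousLinearMap.snd ℝ (Fin N → ℝ) (Fin N → ℝ))).hasFDerivAt
      exact h1.mul h2
    have h : HasFDerivAt (ldf f)
        (∑ s, (pd f s z.1 • ((ContinuousLinearMap.proj s).comp
            (ContinuousLinearMap.snd ℝ (Fin N → ℝ) (Fin N → ℝ)))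
          + z.2 s • ((fderiv ℝ (pd f s) z.1).comp
            (ContinuousLinearMap.fst ℝ (Fin N → ℝ) (Fin N → ℝ))))) z := by
      have := HasFDerivAt.fun_sum (u := (Finset.univ : Finset (Fin N))) (fun s _ => hterm s)
      exact this
    rw [pdT, h.fderiv]
    cases a with
    | inl i => simp [dir, pd, mul_comm]
    | inr i => simp [dir, Pi.single_apply, mul_ite]
  -- derivative of the identity hvf
  have key : ∀ (x : Fin N → ℝ) (s : Fin N),
      ∑ i, (pd (fun x => v x i) s x * pd f i x + v x i * pd (pd f i) s x) = 0 := by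
    intro x s
    have hg : (fun x => ∑ i, v x i * pd f i x) = fun _ => (0:ℝ) := funext hvf
    have hdg : fderiv ℝ (fun x => ∑ i, v x i * pd f i x) x = 0 := by
      rw [hg]; exact fderiv_const_apply 0
    have hsum : fderiv ℝ (fun x => ∑ i, v x i * pd f i x) x
        = ∑ i, fderiv ℝ (fun x => v x i * pd f i x) x := by
      apply fderiv_fun_sum
      intro i _
      exact (((hv i).differentiable (by simp)) x).mul (((hpdf i).differentiable (by simp)) x)
    have happ := congrArg (fun L : (Fin N → ℝ) →L[ℝ] ℝ => L (Pi.single s 1)) hdg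
    rw [hsum] at happ
    simp only [ContinuousLinearMap.sum_apply, ContinuousLinearMap.zero_apply] at happ
    rw [← happ]
    apply Finset.sum_congr rfl
    intro i _
    rw [fderiv_fun_mul (((hv i).differentiable (by simp)) x) (((hpdf i).differentiable (by simp)) x)]
    simp only [ContinuousLinearMap.add_apply, ContinuousLinearMap.smul_apply, smul_eq_mul]
    simp only [pd]
    ring
  constructor
  · intro z b
    rw [Fintype.sum_sum_type]
    simp only [hfq, Sum.elim_inl, Sum.elim_inr, zero_mul, Finset.sum_const_zero, add_zero,
      wedge, liftC, liftV, Matrix.of_apply]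
    cases b with
    | inl j => simp
    | inr j =>
      simp only [Sum.elim_inl, Sum.elim_inr, mul_zero, zero_mul, sub_zero]
      have h1 : ∑ i, pd f i z.1 * (v z.1 i * v z.1 j)
          = (∑ i, pd f i z.1 * v z.1 i) * v z.1 j := by
        rw [Finset.sum_mul]; exact Finset.sum_congr rfl fun i _ => by ring
      rw [h1, hvf', zero_mul]
  · intro z b
    rw [Fintype.sum_sum_type]
    simp only [hldf, Sum.elim_inl, Sum.elim_inr, wedge, liftC, liftV, Matrix.of_apply]
    cases b with
    | inl j =>
      simp only [Sum.elim_inl, Sum.elim_inr, mul_zero, zero_mul, sub_zero, zero_sub, mul_neg,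
        sub_self, Finset.sum_const_zero, zero_add]
      have h1 : ∑ i, pd f i z.1 * (v z.1 j * v z.1 i)
          = v z.1 j * ∑ i, pd f i z.1 * v z.1 i := by
        rw [Finset.mul_sum]; exact Finset.sum_congr rfl fun i _ => by ring
      rw [Finset.sum_neg_distrib, h1, hvf', mul_zero, neg_zero]
    | inr j =>
      simp only [Sum.elim_inl, Sum.elim_inr, mul_zero, zero_mul, sub_zero]
      -- symmetry of second derivatives
      have hsymm : ∀ i, (∑ s, pd (pd f s) i z.1 * z.2 s)
          = ∑ s, pd (pd f i) s z.1 * z.2 s :=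
        fun i => Finset.sum_congr rfl fun s _ => by rw [pd_pd_symm' hf]
      simp only [hsymm]
      have hA : ∑ i, (∑ s, pd (pd f i) s z.1 * z.2 s) * (v z.1 i * v z.1 j)
          = ∑ s, (z.2 s * v z.1 j) * ∑ i, v z.1 i * pd (pd f i) s z.1 := by
        simp only [Finset.sum_mul, Finset.mul_sum]
        rw [Finset.sum_comm]
        exact Finset.sum_congr rfl fun s _ => Finset.sum_congr rfl fun i _ => by ring
      have hB1 : ∑ i, pd f i z.1 * ((∑ s, pd (fun x => v x i) s z.1 * z.2 s) * v z.1 j)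
          = ∑ s, (z.2 s * v z.1 j) * ∑ i, pd (fun x => v x i) s z.1 * pd f i z.1 := by
        simp only [Finset.sum_mul, Finset.mul_sum]
        rw [Finset.sum_comm]
        exact Finset.sum_congr rfl fun s _ => Finset.sum_congr rfl fun i _ => by ring
      have hB2 : ∑ i, pd f i z.1 * ((∑ s, pd (fun x => v x j) s z.1 * z.2 s) * v z.1 i)
          = (∑ s, pd (fun x => v x j) s z.1 * z.2 s) * ∑ i, pd f i z.1 * v z.1 i := by
        rw [Finset.mul_sum]
        exact Finset.sum_congr rfl fun i _ => by ring
      simp only [mul_sub, Finset.sum_sub_distrib]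
      rw [hA, hB1, hB2, hvf', mul_zero, sub_zero, ← Finset.sum_add_distrib]
      have hcomb : ∀ s, (z.2 s * v z.1 j) * (∑ i, v z.1 i * pd (pd f i) s z.1)
          + (z.2 s * v z.1 j) * (∑ i, pd (fun x => v x i) s z.1 * pd f i z.1)
          = (z.2 s * v z.1 j) * ∑ i, (pd (fun x => v x i) s z.1 * pd f i z.1
              + v z.1 i * pd (pd f i) s z.1) := by
        intro s
        rw [Finset.sum_add_distrib]
        ring
      simp only [hcomb, key, mul_zero, Finset.sum_const_zero]
end

section
/- Let π be a Poisson tensor on ℝ^N, c a Casimir function for π, v a Poisson vector field for π, and λ ∈ ℝ. Then the bivector field (x,y) ↦ π_TM(x,y) + λ c(x) (v_C ∧ v_V)(x,y) is a Poisson tensor on ℝ^N × ℝ^N. -/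
open scoped BigOperators

section AuxPD
variable {N : ℕ} {f g : (Fin N → ℝ) → ℝ} {x : Fin N → ℝ}

lemma pd_congr (h : ∀ y, f y = g y) (s : Fin N) (x : Fin N → ℝ) : pd f s x = pd g s x := by
  rw [show f = g from funext h]

lemma pd_const (a : ℝ) (s : Fin N) (x : Fin N → ℝ) : pd (fun _ => a) s x = 0 := by
  simp [pd]

lemma pd_add (hf : DifferentiableAt ℝ f x) (hg : DifferentiableAt ℝ g x) (s : Fin N) :
    pd (fun y => f y + g y) s x = pd f s x + pd g s x := by
  simp [pd, fderiv_fun_add hf hg]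

lemma pd_sub (hf : DifferentiableAt ℝ f x) (hg : DifferentiableAt ℝ g x) (s : Fin N) :
    pd (fun y => f y - g y) s x = pd f s x - pd g s x := by
  simp [pd, fderiv_fun_sub hf hg]

lemma pd_mul (hf : DifferentiableAt ℝ f x) (hg : DifferentiableAt ℝ g x) (s : Fin N) :
    pd (fun y => f y * g y) s x = pd f s x * g x + f x * pd g s x := by
  simp [pd, fderiv_fun_mul hf hg]
  ring

lemma pd_const_mul (hf : DifferentiableAt ℝ f x) (a : ℝ) (s : Fin N) :
    pd (fun y => a * f y) s x = a * pd f s x := by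
  simp [pd, fderiv_const_mul hf a]

lemma pd_neg (s : Fin N) (x : Fin N → ℝ) : pd (fun y => -f y) s x = - pd f s x := by
  simp [pd, fderiv_neg]

lemma pd_sum {ι : Type*} (S : Finset ι) (F : ι → (Fin N → ℝ) → ℝ)
    (h : ∀ i ∈ S, DifferentiableAt ℝ (F i) x) (s : Fin N) :
    pd (fun y => ∑ i ∈ S, F i y) s x = ∑ i ∈ S, pd (F i) s x := by
  simp [pd, fderiv_fun_sum h]

lemma pd_smooth (hf : ContDiff ℝ (⊤ : ℕ∞) f) (s : Fin N) : ContDiff ℝ (⊤ : ℕ∞) fun x => pd f s x :=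
  (hf.fderiv_right (by simp)).clm_apply contDiff_const

lemma pd_comm (hf : ContDiff ℝ (⊤ : ℕ∞) f) (s t : Fin N) (x : Fin N → ℝ) :
    pd (fun y => pd f s y) t x = pd (fun y => pd f t y) s x := by
  have hd : Differentiable ℝ (fderiv ℝ f) := (hf.fderiv_right (m := (⊤ : ℕ∞)) (by simp)).differentiable (by simp)
  have hsymm : IsSymmSndFDerivAt ℝ f x := hf.contDiffAt.isSymmSndFDerivAt (by rw [minSmoothness_of_isRCLikeNormedField]; exact WithTop.coe_le_coe.mpr le_top)
  have key : ∀ a b : Fin N → ℝ,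
      fderiv ℝ (fun y => fderiv ℝ f y a) x b = fderiv ℝ (fderiv ℝ f) x b a := by
    intro a b
    rw [fderiv_clm_apply (hd x) (differentiableAt_const a)]
    simp
  simp only [pd]
  rw [key, key, hsymm]

end AuxPD

section AuxPdT
variable {N : ℕ} {F G : (Fin N → ℝ) × (Fin N → ℝ) → ℝ} {f : (Fin N → ℝ) → ℝ}
  {z : (Fin N → ℝ) × (Fin N → ℝ)}

lemma pdT_congr (h : ∀ w, F w = G w) (a : Fin N ⊕ Fin N) (z : (Fin N → ℝ) × (Fin N → ℝ)) :
    pdT F a z = pdT G a z := by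
  rw [show F = G from funext h]

lemma pdT_const (r : ℝ) (a : Fin N ⊕ Fin N) (z : (Fin N → ℝ) × (Fin N → ℝ)) :
    pdT (fun _ => r) a z = 0 := by simp [pdT]

lemma pdT_add (hf : DifferentiableAt ℝ F z) (hg : DifferentiableAt ℝ G z) (a : Fin N ⊕ Fin N) :
    pdT (fun w => F w + G w) a z = pdT F a z + pdT G a z := by
  simp [pdT, fderiv_fun_add hf hg]

lemma pdT_sub (hf : DifferentiableAt ℝ F z) (hg : DifferentiableAt ℝ G z) (a : Fin N ⊕ Fin N) :
    pdT (fun w => F w - G w) a z = pdT F a z - pdT G a z := by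
  simp [pdT, fderiv_fun_sub hf hg]

lemma pdT_mul (hf : DifferentiableAt ℝ F z) (hg : DifferentiableAt ℝ G z) (a : Fin N ⊕ Fin N) :
    pdT (fun w => F w * G w) a z = pdT F a z * G z + F z * pdT G a z := by
  simp [pdT, fderiv_fun_mul hf hg]
  ring

lemma pdT_sum {ι : Type*} (S : Finset ι) (Fs : ι → (Fin N → ℝ) × (Fin N → ℝ) → ℝ)
    (h : ∀ i ∈ S, DifferentiableAt ℝ (Fs i) z) (a : Fin N ⊕ Fin N) :
    pdT (fun w => ∑ i ∈ S, Fs i w) a z = ∑ i ∈ S, pdT (Fs i) a z := by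
  simp [pdT, fderiv_fun_sum h]

lemma pdT_fst (hf : DifferentiableAt ℝ f z.1) (a : Fin N ⊕ Fin N) :
    pdT (fun w => f w.1) a z = fderiv ℝ f z.1 (dir N a).1 := by
  have h : (fun w : (Fin N → ℝ) × (Fin N → ℝ) => f w.1) = f ∘ Prod.fst := rfl
  rw [pdT, h, fderiv_comp z hf differentiableAt_fst]
  simp [fderiv_fst]

lemma pdT_fst_inl (hf : DifferentiableAt ℝ f z.1) (t : Fin N) :
    pdT (fun w => f w.1) (Sum.inl t) z = pd f t z.1 := by
  rw [pdT_fst hf]; simp [dir, pd]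

lemma pdT_fst_inr (hf : DifferentiableAt ℝ f z.1) (t : Fin N) :
    pdT (fun w => f w.1) (Sum.inr t) z = 0 := by
  rw [pdT_fst hf]; simp [dir]

lemma pdT_snd_apply (s : Fin N) (a : Fin N ⊕ Fin N) (z : (Fin N → ℝ) × (Fin N → ℝ)) :
    pdT (fun w => w.2 s) a z = (dir N a).2 s := by
  have h : (fun w : (Fin N → ℝ) × (Fin N → ℝ) => w.2 s)
      = ⇑((ContinuousLinearMap.proj s : ((Fin N → ℝ)) →L[ℝ] ℝ).comp
          (ContinuousLinearMap.snd ℝ (Fin N → ℝ) (Fin N → ℝ))) := rfl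
  rw [pdT, h, ContinuousLinearMap.fderiv]
  simp

lemma pdT_coord_inl (s t : Fin N) (z : (Fin N → ℝ) × (Fin N → ℝ)) :
    pdT (fun w => w.2 s) (Sum.inl t) z = 0 := by
  rw [pdT_snd_apply]; simp [dir]

lemma pdT_coord_inr (s t : Fin N) (z : (Fin N → ℝ) × (Fin N → ℝ)) :
    pdT (fun w => w.2 s) (Sum.inr t) z = if s = t then 1 else 0 := by
  rw [pdT_snd_apply]; simp [dir, Pi.single_apply]

lemma diff_fq (hf : ContDiff ℝ (⊤ : ℕ∞) f) :
    Differentiable ℝ (fun w : (Fin N → ℝ) × (Fin N → ℝ) => f w.1) :=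
  (hf.differentiable (by simp)).comp differentiable_fst

lemma diff_coord (s : Fin N) : Differentiable ℝ (fun w : (Fin N → ℝ) × (Fin N → ℝ) => w.2 s) :=
  ((ContinuousLinearMap.proj s : ((Fin N → ℝ)) →L[ℝ] ℝ).comp
          (ContinuousLinearMap.snd ℝ (Fin N → ℝ) (Fin N → ℝ))).differentiable

lemma smooth_fq (hf : ContDiff ℝ (⊤ : ℕ∞) f) :
    ContDiff ℝ (⊤ : ℕ∞) (fun w : (Fin N → ℝ) × (Fin N → ℝ) => f w.1) :=
  hf.comp contDiff_fst

lemma smooth_coord (s : Fin N) : ContDiff ℝ (⊤ : ℕ∞) (fun w : (Fin N → ℝ) × (Fin N → ℝ) => w.2 s) :=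
  ((ContinuousLinearMap.proj s : ((Fin N → ℝ)) →L[ℝ] ℝ).comp
          (ContinuousLinearMap.snd ℝ (Fin N → ℝ) (Fin N → ℝ))).contDiff

end AuxPdT
section Entries
variable {N : ℕ} (π : (Fin N → ℝ) → Matrix (Fin N) (Fin N) ℝ) (c : (Fin N → ℝ) → ℝ)
  (v : (Fin N → ℝ) → Fin N → ℝ) (l : ℝ)

lemma entryLL (z : (Fin N → ℝ) × (Fin N → ℝ)) (i j : Fin N) :
    (tlift π z + (l * c z.1) • wedge (liftC v) (liftV v) z) (Sum.inl i) (Sum.inl j) = 0 := by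
  simp [tlift, wedge, liftC, liftV, Matrix.add_apply, Matrix.smul_apply]

lemma entryLR (z : (Fin N → ℝ) × (Fin N → ℝ)) (i j : Fin N) :
    (tlift π z + (l * c z.1) • wedge (liftC v) (liftV v) z) (Sum.inl i) (Sum.inr j)
    = π z.1 i j + l * c z.1 * (v z.1 i * v z.1 j) := by
  simp [tlift, wedge, liftC, liftV, Matrix.add_apply, Matrix.smul_apply, smul_eq_mul]

lemma entryRL (z : (Fin N → ℝ) × (Fin N → ℝ)) (i j : Fin N) :
    (tlift π z + (l * c z.1) • wedge (liftC v) (liftV v) z) (Sum.inr i) (Sum.inl j)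
    = π z.1 i j - l * c z.1 * (v z.1 i * v z.1 j) := by
  simp [tlift, wedge, liftC, liftV, Matrix.add_apply, Matrix.smul_apply, smul_eq_mul]
  ring

lemma entryRR (z : (Fin N → ℝ) × (Fin N → ℝ)) (i j : Fin N) :
    (tlift π z + (l * c z.1) • wedge (liftC v) (liftV v) z) (Sum.inr i) (Sum.inr j)
    = (∑ s, pd (fun x => π x i j) s z.1 * z.2 s)
      + l * c z.1 * ((∑ s, pd (fun x => v x i) s z.1 * z.2 s) * v z.1 j
          - (∑ s, pd (fun x => v x j) s z.1 * z.2 s) * v z.1 i) := by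
  simp [tlift, wedge, liftC, liftV, Matrix.add_apply, Matrix.smul_apply, smul_eq_mul]

end Entries
section Derivs
variable {N : ℕ} {π : (Fin N → ℝ) → Matrix (Fin N) (Fin N) ℝ} {c : (Fin N → ℝ) → ℝ}
  {v : (Fin N → ℝ) → Fin N → ℝ} {l : ℝ}

lemma pdT_ysum_inl (G : Fin N → (Fin N → ℝ) → ℝ) (hG : ∀ s, ContDiff ℝ (⊤ : ℕ∞) (G s))
    (t : Fin N) (z : (Fin N → ℝ) × (Fin N → ℝ)) :
    pdT (fun w => ∑ s, G s w.1 * w.2 s) (Sum.inl t) z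
      = ∑ s, pd (fun x => G s x) t z.1 * z.2 s := by
  rw [pdT_sum Finset.univ (fun s w => G s w.1 * w.2 s)
      (fun s _ => ((diff_fq (hG s)).mul (diff_coord s)).differentiableAt) (Sum.inl t)]
  refine Finset.sum_congr rfl fun s _ => ?_
  rw [pdT_mul ((diff_fq (hG s)) z) ((diff_coord s) z) (Sum.inl t),
      pdT_fst_inl (f := fun x => G s x) (((hG s).differentiable (by simp)) z.1) t,
      pdT_coord_inl s t z]
  ring

lemma pdT_ysum_inr (G : Fin N → (Fin N → ℝ) → ℝ) (hG : ∀ s, ContDiff ℝ (⊤ : ℕ∞) (G s))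
    (t : Fin N) (z : (Fin N → ℝ) × (Fin N → ℝ)) :
    pdT (fun w => ∑ s, G s w.1 * w.2 s) (Sum.inr t) z = G t z.1 := by
  rw [pdT_sum Finset.univ (fun s w => G s w.1 * w.2 s)
      (fun s _ => ((diff_fq (hG s)).mul (diff_coord s)).differentiableAt) (Sum.inr t)]
  have h : ∀ s : Fin N, pdT (fun w => G s w.1 * w.2 s) (Sum.inr t) z
      = if s = t then G s z.1 else 0 := by
    intro s
    rw [pdT_mul ((diff_fq (hG s)) z) ((diff_coord s) z) (Sum.inr t),
        pdT_fst_inr (f := fun x => G s x) (((hG s).differentiable (by simp)) z.1) t,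
        pdT_coord_inr s t z]
    by_cases hst : s = t <;> simp [hst]
  simp [h]

variable
  (hπs : ∀ i j, ContDiff ℝ (⊤ : ℕ∞) fun x => π x i j)
  (hcs : ContDiff ℝ (⊤ : ℕ∞) c)
  (hvs : ∀ i, ContDiff ℝ (⊤ : ℕ∞) fun x => v x i)

section
include hπs hcs hvs

lemma dLL (i j : Fin N) (a : Fin N ⊕ Fin N) (z : (Fin N → ℝ) × (Fin N → ℝ)) :
    pdT (fun w => (tlift π w + (l * c w.1) • wedge (liftC v) (liftV v) w) (Sum.inl i) (Sum.inl j))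
      a z = 0 := by
  rw [pdT_congr (fun w => entryLL π c v l w i j) a z]
  exact pdT_const 0 a z

lemma dLR_inl (i j t : Fin N) (z : (Fin N → ℝ) × (Fin N → ℝ)) :
    pdT (fun w => (tlift π w + (l * c w.1) • wedge (liftC v) (liftV v) w) (Sum.inl i) (Sum.inr j))
      (Sum.inl t) z
    = pd (fun x => π x i j) t z.1 + l * pd c t z.1 * (v z.1 i * v z.1 j)
      + l * c z.1 * (pd (fun x => v x i) t z.1 * v z.1 j
          + v z.1 i * pd (fun x => v x j) t z.1) := by
  have hπd := (hπs i j).differentiable (by simp)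
  have hcd := hcs.differentiable (by simp)
  have hvd : ∀ m, Differentiable ℝ (fun x => v x m) := fun m => (hvs m).differentiable (by simp)
  rw [pdT_congr (fun w => entryLR π c v l w i j) _ z,
      pdT_fst_inl (f := fun x => π x i j + l * c x * (v x i * v x j))
        ((hπd z.1).fun_add (((hcd z.1).const_mul l).fun_mul ((hvd i z.1).fun_mul (hvd j z.1)))) t,
      pd_add (hπd z.1) (((hcd z.1).const_mul l).fun_mul ((hvd i z.1).fun_mul (hvd j z.1))) t,
      pd_mul (((hcd z.1).const_mul l)) ((hvd i z.1).fun_mul (hvd j z.1)) t,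
      pd_const_mul (hcd z.1) l t,
      pd_mul (hvd i z.1) (hvd j z.1) t]
  ring

lemma dLR_inr (i j t : Fin N) (z : (Fin N → ℝ) × (Fin N → ℝ)) :
    pdT (fun w => (tlift π w + (l * c w.1) • wedge (liftC v) (liftV v) w) (Sum.inl i) (Sum.inr j))
      (Sum.inr t) z = 0 := by
  have hπd := (hπs i j).differentiable (by simp)
  have hcd := hcs.differentiable (by simp)
  have hvd : ∀ m, Differentiable ℝ (fun x => v x m) := fun m => (hvs m).differentiable (by simp)
  rw [pdT_congr (fun w => entryLR π c v l w i j) _ z,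
      pdT_fst_inr (f := fun x => π x i j + l * c x * (v x i * v x j))
        ((hπd z.1).fun_add (((hcd z.1).const_mul l).fun_mul ((hvd i z.1).fun_mul (hvd j z.1)))) t]

lemma dRL_inl (i j t : Fin N) (z : (Fin N → ℝ) × (Fin N → ℝ)) :
    pdT (fun w => (tlift π w + (l * c w.1) • wedge (liftC v) (liftV v) w) (Sum.inr i) (Sum.inl j))
      (Sum.inl t) z
    = pd (fun x => π x i j) t z.1 - l * pd c t z.1 * (v z.1 i * v z.1 j)
      - l * c z.1 * (pd (fun x => v x i) t z.1 * v z.1 j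
          + v z.1 i * pd (fun x => v x j) t z.1) := by
  have hπd := (hπs i j).differentiable (by simp)
  have hcd := hcs.differentiable (by simp)
  have hvd : ∀ m, Differentiable ℝ (fun x => v x m) := fun m => (hvs m).differentiable (by simp)
  rw [pdT_congr (fun w => entryRL π c v l w i j) _ z,
      pdT_fst_inl (f := fun x => π x i j - l * c x * (v x i * v x j))
        ((hπd z.1).fun_sub (((hcd z.1).const_mul l).fun_mul ((hvd i z.1).fun_mul (hvd j z.1)))) t,
      pd_sub (hπd z.1) (((hcd z.1).const_mul l).fun_mul ((hvd i z.1).fun_mul (hvd j z.1))) t,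
      pd_mul (((hcd z.1).const_mul l)) ((hvd i z.1).fun_mul (hvd j z.1)) t,
      pd_const_mul (hcd z.1) l t,
      pd_mul (hvd i z.1) (hvd j z.1) t]
  ring

lemma dRL_inr (i j t : Fin N) (z : (Fin N → ℝ) × (Fin N → ℝ)) :
    pdT (fun w => (tlift π w + (l * c w.1) • wedge (liftC v) (liftV v) w) (Sum.inr i) (Sum.inl j))
      (Sum.inr t) z = 0 := by
  have hπd := (hπs i j).differentiable (by simp)
  have hcd := hcs.differentiable (by simp)
  have hvd : ∀ m, Differentiable ℝ (fun x => v x m) := fun m => (hvs m).differentiable (by simp)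
  rw [pdT_congr (fun w => entryRL π c v l w i j) _ z,
      pdT_fst_inr (f := fun x => π x i j - l * c x * (v x i * v x j))
        ((hπd z.1).fun_sub (((hcd z.1).const_mul l).fun_mul ((hvd i z.1).fun_mul (hvd j z.1)))) t]

lemma dRR_inr (i j t : Fin N) (z : (Fin N → ℝ) × (Fin N → ℝ)) :
    pdT (fun w => (tlift π w + (l * c w.1) • wedge (liftC v) (liftV v) w) (Sum.inr i) (Sum.inr j))
      (Sum.inr t) z
    = pd (fun x => π x i j) t z.1
      + l * c z.1 * (pd (fun x => v x i) t z.1 * v z.1 j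
          - pd (fun x => v x j) t z.1 * v z.1 i) := by
  have hvd : ∀ m, Differentiable ℝ (fun x => v x m) := fun m => (hvs m).differentiable (by simp)
  have hQ : Differentiable ℝ (fun w : (Fin N → ℝ) × (Fin N → ℝ) =>
      ∑ s, pd (fun x => π x i j) s w.1 * w.2 s) :=
    Differentiable.fun_sum fun s _ => (diff_fq (pd_smooth (hπs i j) s)).fun_mul (diff_coord s)
  have hU : ∀ m, Differentiable ℝ (fun w : (Fin N → ℝ) × (Fin N → ℝ) =>
      ∑ s, pd (fun x => v x m) s w.1 * w.2 s) := fun m =>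
    Differentiable.fun_sum fun s _ => (diff_fq (pd_smooth (hvs m) s)).fun_mul (diff_coord s)
  have hbr : Differentiable ℝ (fun w : (Fin N → ℝ) × (Fin N → ℝ) =>
      (∑ s, pd (fun x => v x i) s w.1 * w.2 s) * v w.1 j
        - (∑ s, pd (fun x => v x j) s w.1 * w.2 s) * v w.1 i) :=
    ((hU i).fun_mul (diff_fq (hvs j))).fun_sub ((hU j).fun_mul (diff_fq (hvs i)))
  have hlc : Differentiable ℝ (fun w : (Fin N → ℝ) × (Fin N → ℝ) => l * c w.1) :=
    (diff_fq hcs).const_mul l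
  rw [pdT_congr (fun w => entryRR π c v l w i j) _ z,
      pdT_add (hQ z) ((hlc.fun_mul hbr) z) (Sum.inr t),
      pdT_ysum_inr (fun s => pd (fun x => π x i j) s) (fun s => pd_smooth (hπs i j) s) t z,
      pdT_mul (hlc z) (hbr z) (Sum.inr t),
      pdT_fst_inr (f := fun x => l * c x) ((hcs.differentiable (by simp) z.1).const_mul l) t,
      pdT_sub ((hU i).fun_mul (diff_fq (hvs j)) |>.differentiableAt)
        ((hU j).fun_mul (diff_fq (hvs i)) |>.differentiableAt) (Sum.inr t),
      pdT_mul ((hU i) z) ((diff_fq (hvs j)) z) (Sum.inr t),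
      pdT_mul ((hU j) z) ((diff_fq (hvs i)) z) (Sum.inr t),
      pdT_ysum_inr (fun s => pd (fun x => v x i) s) (fun s => pd_smooth (hvs i) s) t z,
      pdT_ysum_inr (fun s => pd (fun x => v x j) s) (fun s => pd_smooth (hvs j) s) t z,
      pdT_fst_inr (f := fun x => v x j) (hvd j z.1) t,
      pdT_fst_inr (f := fun x => v x i) (hvd i z.1) t]
  ring

lemma dRR_inl (i j t : Fin N) (z : (Fin N → ℝ) × (Fin N → ℝ)) :
    pdT (fun w => (tlift π w + (l * c w.1) • wedge (liftC v) (liftV v) w) (Sum.inr i) (Sum.inr j))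
      (Sum.inl t) z
    = (∑ s, pd (fun x => pd (fun x => π x i j) t x) s z.1 * z.2 s)
      + l * pd c t z.1 * ((∑ s, pd (fun x => v x i) s z.1 * z.2 s) * v z.1 j
            - (∑ s, pd (fun x => v x j) s z.1 * z.2 s) * v z.1 i)
      + l * c z.1 * ((∑ s, pd (fun x => pd (fun x => v x i) t x) s z.1 * z.2 s) * v z.1 j
            + (∑ s, pd (fun x => v x i) s z.1 * z.2 s) * pd (fun x => v x j) t z.1
            - (∑ s, pd (fun x => pd (fun x => v x j) t x) s z.1 * z.2 s) * v z.1 i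
            - (∑ s, pd (fun x => v x j) s z.1 * z.2 s) * pd (fun x => v x i) t z.1) := by
  have hvd : ∀ m, Differentiable ℝ (fun x => v x m) := fun m => (hvs m).differentiable (by simp)
  have hQ : Differentiable ℝ (fun w : (Fin N → ℝ) × (Fin N → ℝ) =>
      ∑ s, pd (fun x => π x i j) s w.1 * w.2 s) :=
    Differentiable.fun_sum fun s _ => (diff_fq (pd_smooth (hπs i j) s)).fun_mul (diff_coord s)
  have hU : ∀ m, Differentiable ℝ (fun w : (Fin N → ℝ) × (Fin N → ℝ) =>
      ∑ s, pd (fun x => v x m) s w.1 * w.2 s) := fun m =>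
    Differentiable.fun_sum fun s _ => (diff_fq (pd_smooth (hvs m) s)).fun_mul (diff_coord s)
  have hbr : Differentiable ℝ (fun w : (Fin N → ℝ) × (Fin N → ℝ) =>
      (∑ s, pd (fun x => v x i) s w.1 * w.2 s) * v w.1 j
        - (∑ s, pd (fun x => v x j) s w.1 * w.2 s) * v w.1 i) :=
    ((hU i).fun_mul (diff_fq (hvs j))).fun_sub ((hU j).fun_mul (diff_fq (hvs i)))
  have hlc : Differentiable ℝ (fun w : (Fin N → ℝ) × (Fin N → ℝ) => l * c w.1) :=
    (diff_fq hcs).const_mul l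
  have hswapπ : (∑ s, pd (fun x => pd (fun x => π x i j) s x) t z.1 * z.2 s)
      = ∑ s, pd (fun x => pd (fun x => π x i j) t x) s z.1 * z.2 s :=
    Finset.sum_congr rfl fun s _ => by rw [pd_comm (hπs i j) s t z.1]
  have hswapv : ∀ m, (∑ s, pd (fun x => pd (fun x => v x m) s x) t z.1 * z.2 s)
      = ∑ s, pd (fun x => pd (fun x => v x m) t x) s z.1 * z.2 s := fun m =>
    Finset.sum_congr rfl fun s _ => by rw [pd_comm (hvs m) s t z.1]
  rw [pdT_congr (fun w => entryRR π c v l w i j) _ z,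
      pdT_add (hQ z) ((hlc.fun_mul hbr) z) (Sum.inl t),
      pdT_ysum_inl (fun s => pd (fun x => π x i j) s) (fun s => pd_smooth (hπs i j) s) t z,
      pdT_mul (hlc z) (hbr z) (Sum.inl t),
      pdT_fst_inl (f := fun x => l * c x) ((hcs.differentiable (by simp) z.1).const_mul l) t,
      pd_const_mul (hcs.differentiable (by simp) z.1) l t,
      pdT_sub ((hU i).fun_mul (diff_fq (hvs j)) |>.differentiableAt)
        ((hU j).fun_mul (diff_fq (hvs i)) |>.differentiableAt) (Sum.inl t),
      pdT_mul ((hU i) z) ((diff_fq (hvs j)) z) (Sum.inl t),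
      pdT_mul ((hU j) z) ((diff_fq (hvs i)) z) (Sum.inl t),
      pdT_ysum_inl (fun s => pd (fun x => v x i) s) (fun s => pd_smooth (hvs i) s) t z,
      pdT_ysum_inl (fun s => pd (fun x => v x j) s) (fun s => pd_smooth (hvs j) s) t z,
      pdT_fst_inl (f := fun x => v x j) (hvd j z.1) t,
      pdT_fst_inl (f := fun x => v x i) (hvd i z.1) t,
      hswapπ, hswapv i, hswapv j]
  ring

end
end Derivs
section Relations
variable {N : ℕ} {π : (Fin N → ℝ) → Matrix (Fin N) (Fin N) ℝ} {c : (Fin N → ℝ) → ℝ}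
  {v : (Fin N → ℝ) → Fin N → ℝ}

lemma antisym_pd (hA : ∀ x i j, π x j i = -π x i j) (i j : Fin N) (s : Fin N) (x : Fin N → ℝ) :
    pd (fun x => π x j i) s x = - pd (fun x => π x i j) s x := by
  rw [pd_congr (g := fun y => -π y i j) (fun y => hA y i j) s x, pd_neg]

/-- oriented Poisson-vector-field identity -/
lemma rel_eV1 (hA : ∀ x i j, π x j i = -π x i j)
    (hV : ∀ x i j, ∑ s, (pd (fun x => π x i j) s x * v x s
      - π x s j * pd (fun x => v x i) s x - π x i s * pd (fun x => v x j) s x) = 0)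
    (x : Fin N → ℝ) (i j : Fin N) :
    ∑ t, (pd (fun x => π x i j) t x * v x t + π x j t * pd (fun x => v x i) t x
      - π x i t * pd (fun x => v x j) t x) = 0 := by
  have h := hV x i j
  calc ∑ t, (pd (fun x => π x i j) t x * v x t + π x j t * pd (fun x => v x i) t x
      - π x i t * pd (fun x => v x j) t x)
      = ∑ t, (pd (fun x => π x i j) t x * v x t
        - π x t j * pd (fun x => v x i) t x - π x i t * pd (fun x => v x j) t x) := by
        refine Finset.sum_congr rfl fun t _ => ?_
        rw [hA x j t]; ring
    _ = 0 := h

/-- oriented Casimir identity -/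
lemma rel_eC1 (hA : ∀ x i j, π x j i = -π x i j)
    (hC : ∀ x j, ∑ i, pd c i x * π x i j = 0)
    (x : Fin N → ℝ) (j : Fin N) :
    ∑ t, pd c t x * π x j t = 0 := by
  have h := hC x j
  calc ∑ t, pd c t x * π x j t = ∑ t, -(pd c t x * π x t j) := by
        refine Finset.sum_congr rfl fun t _ => ?_
        rw [hA x j t]; ring
    _ = 0 := by rw [Finset.sum_neg_distrib, h, neg_zero]

/-- differentiated Jacobi identity -/
lemma rel_Jp (hπs : ∀ i j, ContDiff ℝ (⊤ : ℕ∞) fun x => π x i j)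
    (hJ : ∀ x i j k, ∑ s, (π x i s * pd (fun x => π x j k) s x
      + π x j s * pd (fun x => π x k i) s x
      + π x k s * pd (fun x => π x i j) s x) = 0)
    (x : Fin N → ℝ) (i j k r : Fin N) :
    ∑ t, (pd (fun x => π x i t) r x * pd (fun x => π x j k) t x
        + π x i t * pd (fun x => pd (fun x => π x j k) t x) r x
        + (pd (fun x => π x j t) r x * pd (fun x => π x k i) t x
          + π x j t * pd (fun x => pd (fun x => π x k i) t x) r x)
        + (pd (fun x => π x k t) r x * pd (fun x => π x i j) t x
          + π x k t * pd (fun x => pd (fun x => π x i j) t x) r x)) = 0 := by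
  have dπ : ∀ a b, Differentiable ℝ (fun y => π y a b) :=
    fun a b => (hπs a b).differentiable (by simp)
  have dpdπ : ∀ a b t, Differentiable ℝ (fun y => pd (fun x => π x a b) t y) :=
    fun a b t => (pd_smooth (hπs a b) t).differentiable (by simp)
  have h0 : pd (fun y => ∑ s, (π y i s * pd (fun x => π x j k) s y
      + π y j s * pd (fun x => π x k i) s y
      + π y k s * pd (fun x => π x i j) s y)) r x = 0 := by
    rw [pd_congr (g := fun _ => (0:ℝ)) (fun y => hJ y i j k) r x, pd_const]
  rw [pd_sum Finset.univ _ (fun t _ => ((((dπ i t).fun_mul (dpdπ j k t)).fun_add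
      ((dπ j t).fun_mul (dpdπ k i t))).fun_add ((dπ k t).fun_mul (dpdπ i j t))).differentiableAt) r] at h0
  calc ∑ t, (pd (fun x => π x i t) r x * pd (fun x => π x j k) t x
        + π x i t * pd (fun x => pd (fun x => π x j k) t x) r x
        + (pd (fun x => π x j t) r x * pd (fun x => π x k i) t x
          + π x j t * pd (fun x => pd (fun x => π x k i) t x) r x)
        + (pd (fun x => π x k t) r x * pd (fun x => π x i j) t x
          + π x k t * pd (fun x => pd (fun x => π x i j) t x) r x))
      = ∑ t, pd (fun y => π y i t * pd (fun x => π x j k) t y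
          + π y j t * pd (fun x => π x k i) t y
          + π y k t * pd (fun x => π x i j) t y) r x := by
        refine Finset.sum_congr rfl fun t _ => ?_
        rw [pd_add (((dπ i t).fun_mul (dpdπ j k t)).fun_add ((dπ j t).fun_mul (dpdπ k i t)) x)
            (((dπ k t).fun_mul (dpdπ i j t)) x) r,
          pd_add (((dπ i t).fun_mul (dpdπ j k t)) x) (((dπ j t).fun_mul (dpdπ k i t)) x) r,
          pd_mul ((dπ i t) x) ((dpdπ j k t) x) r,
          pd_mul ((dπ j t) x) ((dpdπ k i t) x) r,
          pd_mul ((dπ k t) x) ((dpdπ i j t) x) r]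
    _ = 0 := h0

/-- differentiated oriented Poisson-vector-field identity -/
lemma rel_Vp (hπs : ∀ i j, ContDiff ℝ (⊤ : ℕ∞) fun x => π x i j)
    (hvs : ∀ i, ContDiff ℝ (⊤ : ℕ∞) fun x => v x i)
    (heV1 : ∀ (x : Fin N → ℝ) (i j : Fin N),
      ∑ t, (pd (fun x => π x i j) t x * v x t + π x j t * pd (fun x => v x i) t x
        - π x i t * pd (fun x => v x j) t x) = 0)
    (x : Fin N → ℝ) (i j r : Fin N) :
    ∑ t, (pd (fun x => pd (fun x => π x i j) t x) r x * v x t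
        + pd (fun x => π x i j) t x * pd (fun x => v x t) r x
        + (pd (fun x => π x j t) r x * pd (fun x => v x i) t x
          + π x j t * pd (fun x => pd (fun x => v x i) t x) r x)
        - (pd (fun x => π x i t) r x * pd (fun x => v x j) t x
          + π x i t * pd (fun x => pd (fun x => v x j) t x) r x)) = 0 := by
  have dπ : ∀ a b, Differentiable ℝ (fun y => π y a b) :=
    fun a b => (hπs a b).differentiable (by simp)
  have dpdπ : ∀ a b t, Differentiable ℝ (fun y => pd (fun x => π x a b) t y) :=
    fun a b t => (pd_smooth (hπs a b) t).differentiable (by simp)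
  have dv : ∀ m, Differentiable ℝ (fun y => v y m) := fun m => (hvs m).differentiable (by simp)
  have dpdv : ∀ m t, Differentiable ℝ (fun y => pd (fun x => v x m) t y) :=
    fun m t => (pd_smooth (hvs m) t).differentiable (by simp)
  have h0 : pd (fun y => ∑ t, (pd (fun x => π x i j) t y * v y t
      + π y j t * pd (fun x => v x i) t y
      - π y i t * pd (fun x => v x j) t y)) r x = 0 := by
    rw [pd_congr (g := fun _ => (0:ℝ)) (fun y => heV1 y i j) r x, pd_const]
  rw [pd_sum Finset.univ _ (fun t _ => ((((dpdπ i j t).fun_mul (dv t)).fun_add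
      ((dπ j t).fun_mul (dpdv i t))).fun_sub ((dπ i t).fun_mul (dpdv j t))).differentiableAt) r] at h0
  calc ∑ t, (pd (fun x => pd (fun x => π x i j) t x) r x * v x t
        + pd (fun x => π x i j) t x * pd (fun x => v x t) r x
        + (pd (fun x => π x j t) r x * pd (fun x => v x i) t x
          + π x j t * pd (fun x => pd (fun x => v x i) t x) r x)
        - (pd (fun x => π x i t) r x * pd (fun x => v x j) t x
          + π x i t * pd (fun x => pd (fun x => v x j) t x) r x))
      = ∑ t, pd (fun y => pd (fun x => π x i j) t y * v y t
          + π y j t * pd (fun x => v x i) t y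
          - π y i t * pd (fun x => v x j) t y) r x := by
        refine Finset.sum_congr rfl fun t _ => ?_
        rw [pd_sub (((dpdπ i j t).fun_mul (dv t)).fun_add ((dπ j t).fun_mul (dpdv i t)) x)
            (((dπ i t).fun_mul (dpdv j t)) x) r,
          pd_add (((dpdπ i j t).fun_mul (dv t)) x) (((dπ j t).fun_mul (dpdv i t)) x) r,
          pd_mul ((dpdπ i j t) x) ((dv t) x) r,
          pd_mul ((dπ j t) x) ((dpdv i t) x) r,
          pd_mul ((dπ i t) x) ((dpdv j t) x) r]
    _ = 0 := h0

end Relations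
lemma case3 {N : ℕ} {π : (Fin N → ℝ) → Matrix (Fin N) (Fin N) ℝ} {c : (Fin N → ℝ) → ℝ}
    {v : (Fin N → ℝ) → Fin N → ℝ} {l : ℝ}
    (hπs : ∀ i j, ContDiff ℝ (⊤ : ℕ∞) fun x => π x i j)
    (hcs : ContDiff ℝ (⊤ : ℕ∞) c)
    (hvs : ∀ i, ContDiff ℝ (⊤ : ℕ∞) fun x => v x i)
    (hJ : ∀ x i j k, ∑ s, (π x i s * pd (fun x => π x j k) s x
      + π x j s * pd (fun x => π x k i) s x
      + π x k s * pd (fun x => π x i j) s x) = 0)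
    (heV1 : ∀ (x : Fin N → ℝ) (i j : Fin N),
      ∑ t, (pd (fun x => π x i j) t x * v x t + π x j t * pd (fun x => v x i) t x
        - π x i t * pd (fun x => v x j) t x) = 0)
    (heC1 : ∀ (x : Fin N → ℝ) (j : Fin N), ∑ t, pd c t x * π x j t = 0)
    (z : (Fin N → ℝ) × (Fin N → ℝ)) (i j k : Fin N) :
    ∑ s : Fin N ⊕ Fin N,
      ((tlift π z + (l * c z.1) • wedge (liftC v) (liftV v) z) (Sum.inl i) s *
          pdT (fun z => (tlift π z + (l * c z.1) • wedge (liftC v) (liftV v) z) (Sum.inr j) (Sum.inr k)) s z +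
        (tlift π z + (l * c z.1) • wedge (liftC v) (liftV v) z) (Sum.inr j) s *
          pdT (fun z => (tlift π z + (l * c z.1) • wedge (liftC v) (liftV v) z) (Sum.inr k) (Sum.inl i)) s z +
        (tlift π z + (l * c z.1) • wedge (liftC v) (liftV v) z) (Sum.inr k) s *
          pdT (fun z => (tlift π z + (l * c z.1) • wedge (liftC v) (liftV v) z) (Sum.inl i) (Sum.inr j)) s z) = 0 := by
  rw [Fintype.sum_sum_type]
  simp only [dLL hπs hcs hvs, dLR_inl hπs hcs hvs, dLR_inr hπs hcs hvs,
    dRL_inl hπs hcs hvs, dRL_inr hπs hcs hvs, dRR_inl hπs hcs hvs, dRR_inr hπs hcs hvs]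
  simp only [entryLL, entryLR, entryRL, entryRR, zero_mul, mul_zero, add_zero, zero_add]
  rw [← Finset.sum_add_distrib]
  trans (∑ t, (1 * (π z.1 i t * pd (fun x => π x j k) t z.1 + π z.1 j t * pd (fun x => π x k i) t z.1 + π z.1 k t * pd (fun x => π x i j) t z.1)
      + (l * c z.1 * v z.1 i) * (pd (fun x => π x j k) t z.1 * v z.1 t + π z.1 k t * pd (fun x => v x j) t z.1 - π z.1 j t * pd (fun x => v x k) t z.1)
      + (-(l * c z.1 * v z.1 j)) * (pd (fun x => π x k i) t z.1 * v z.1 t + π z.1 i t * pd (fun x => v x k) t z.1 - π z.1 k t * pd (fun x => v x i) t z.1)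
      + (-(l * c z.1 * v z.1 k)) * (pd (fun x => π x i j) t z.1 * v z.1 t + π z.1 j t * pd (fun x => v x i) t z.1 - π z.1 i t * pd (fun x => v x j) t z.1)
      + (-(l * (v z.1 k * v z.1 i))) * (pd c t z.1 * π z.1 j t)
      + (l * (v z.1 i * v z.1 j)) * (pd c t z.1 * π z.1 k t)))
  · exact Finset.sum_congr rfl fun t _ => by ring
  · have e1 := hJ z.1 i j k
    have e2 := heV1 z.1 j k
    have e3 := heV1 z.1 k i
    have e4 := heV1 z.1 i j
    have e5 := heC1 z.1 j
    have e6 := heC1 z.1 k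
    simp only [Finset.sum_add_distrib, Finset.sum_sub_distrib, ← Finset.mul_sum] at e1 e2 e3 e4 e5 e6 ⊢
    linear_combination e1 + (l * c z.1 * v z.1 i) * e2 - (l * c z.1 * v z.1 j) * e3
      - (l * c z.1 * v z.1 k) * e4 - (l * (v z.1 k * v z.1 i)) * e5
      + (l * (v z.1 i * v z.1 j)) * e6

lemma case4 {N : ℕ} {π : (Fin N → ℝ) → Matrix (Fin N) (Fin N) ℝ} {c : (Fin N → ℝ) → ℝ}
    {v : (Fin N → ℝ) → Fin N → ℝ} {l : ℝ}
    (hπs : ∀ i j, ContDiff ℝ (⊤ : ℕ∞) fun x => π x i j)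
    (hcs : ContDiff ℝ (⊤ : ℕ∞) c)
    (hvs : ∀ i, ContDiff ℝ (⊤ : ℕ∞) fun x => v x i)
    (hJ : ∀ x i j k, ∑ s, (π x i s * pd (fun x => π x j k) s x
      + π x j s * pd (fun x => π x k i) s x
      + π x k s * pd (fun x => π x i j) s x) = 0)
    (heV1 : ∀ (x : Fin N → ℝ) (i j : Fin N),
      ∑ t, (pd (fun x => π x i j) t x * v x t + π x j t * pd (fun x => v x i) t x
        - π x i t * pd (fun x => v x j) t x) = 0)
    (heC1 : ∀ (x : Fin N → ℝ) (j : Fin N), ∑ t, pd c t x * π x j t = 0)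
    (hJp : ∀ (x : Fin N → ℝ) (i j k r : Fin N),
      ∑ t, (pd (fun x => π x i t) r x * pd (fun x => π x j k) t x
        + π x i t * pd (fun x => pd (fun x => π x j k) t x) r x
        + (pd (fun x => π x j t) r x * pd (fun x => π x k i) t x
          + π x j t * pd (fun x => pd (fun x => π x k i) t x) r x)
        + (pd (fun x => π x k t) r x * pd (fun x => π x i j) t x
          + π x k t * pd (fun x => pd (fun x => π x i j) t x) r x)) = 0)
    (heVp : ∀ (x : Fin N → ℝ) (i j r : Fin N),
      ∑ t, (pd (fun x => pd (fun x => π x i j) t x) r x * v x t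
        + pd (fun x => π x i j) t x * pd (fun x => v x t) r x
        + (pd (fun x => π x j t) r x * pd (fun x => v x i) t x
          + π x j t * pd (fun x => pd (fun x => v x i) t x) r x)
        - (pd (fun x => π x i t) r x * pd (fun x => v x j) t x
          + π x i t * pd (fun x => pd (fun x => v x j) t x) r x)) = 0)
    (z : (Fin N → ℝ) × (Fin N → ℝ)) (i j k : Fin N) :
    ∑ s : Fin N ⊕ Fin N,
      ((tlift π z + (l * c z.1) • wedge (liftC v) (liftV v) z) (Sum.inr i) s *
          pdT (fun z => (tlift π z + (l * c z.1) • wedge (liftC v) (liftV v) z) (Sum.inr j) (Sum.inr k)) s z +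
        (tlift π z + (l * c z.1) • wedge (liftC v) (liftV v) z) (Sum.inr j) s *
          pdT (fun z => (tlift π z + (l * c z.1) • wedge (liftC v) (liftV v) z) (Sum.inr k) (Sum.inr i)) s z +
        (tlift π z + (l * c z.1) • wedge (liftC v) (liftV v) z) (Sum.inr k) s *
          pdT (fun z => (tlift π z + (l * c z.1) • wedge (liftC v) (liftV v) z) (Sum.inr i) (Sum.inr j)) s z) = 0 := by
  rw [Fintype.sum_sum_type]
  simp only [dRL_inl hπs hcs hvs, dRL_inr hπs hcs hvs,
    dRR_inl hπs hcs hvs, dRR_inr hπs hcs hvs]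
  simp only [entryRL, entryRR]
  rw [← Finset.sum_add_distrib]
  trans (∑ t, ∑ s, (pd (fun x => π x j k) t z.1 * (pd (fun x => π x i t) s z.1 * z.2 s)
      + π z.1 i t * (pd (fun x => pd (fun x => π x j k) t x) s z.1 * z.2 s)
      + pd (fun x => π x k i) t z.1 * (pd (fun x => π x j t) s z.1 * z.2 s)
      + π z.1 j t * (pd (fun x => pd (fun x => π x k i) t x) s z.1 * z.2 s)
      + pd (fun x => π x i j) t z.1 * (pd (fun x => π x k t) s z.1 * z.2 s)
      + π z.1 k t * (pd (fun x => pd (fun x => π x i j) t x) s z.1 * z.2 s)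
      + (l * c z.1 * (pd (fun x => π x j k) t z.1 * v z.1 t + π z.1 k t * pd (fun x => v x j) t z.1 - π z.1 j t * pd (fun x => v x k) t z.1)) * (pd (fun x => v x i) s z.1 * z.2 s)
      + (l * c z.1 * (pd (fun x => π x k i) t z.1 * v z.1 t + π z.1 i t * pd (fun x => v x k) t z.1 - π z.1 k t * pd (fun x => v x i) t z.1)) * (pd (fun x => v x j) s z.1 * z.2 s)
      + (l * c z.1 * (pd (fun x => π x i j) t z.1 * v z.1 t + π z.1 j t * pd (fun x => v x i) t z.1 - π z.1 i t * pd (fun x => v x j) t z.1)) * (pd (fun x => v x k) s z.1 * z.2 s)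
      + (-(l * c z.1 * (v z.1 i * v z.1 t))) * (pd (fun x => pd (fun x => π x j k) t x) s z.1 * z.2 s)
      + (-(l * c z.1 * (v z.1 i * pd (fun x => π x j k) t z.1))) * (pd (fun x => v x t) s z.1 * z.2 s)
      + (-(l * c z.1 * (v z.1 i * pd (fun x => v x j) t z.1))) * (pd (fun x => π x k t) s z.1 * z.2 s)
      + (-(l * c z.1 * (v z.1 i * π z.1 k t))) * (pd (fun x => pd (fun x => v x j) t x) s z.1 * z.2 s)
      + (l * c z.1 * (v z.1 i * pd (fun x => v x k) t z.1)) * (pd (fun x => π x j t) s z.1 * z.2 s)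
      + (l * c z.1 * (v z.1 i * π z.1 j t)) * (pd (fun x => pd (fun x => v x k) t x) s z.1 * z.2 s)
      + (-(l * c z.1 * (v z.1 j * v z.1 t))) * (pd (fun x => pd (fun x => π x k i) t x) s z.1 * z.2 s)
      + (-(l * c z.1 * (v z.1 j * pd (fun x => π x k i) t z.1))) * (pd (fun x => v x t) s z.1 * z.2 s)
      + (-(l * c z.1 * (v z.1 j * pd (fun x => v x k) t z.1))) * (pd (fun x => π x i t) s z.1 * z.2 s)
      + (-(l * c z.1 * (v z.1 j * π z.1 i t))) * (pd (fun x => pd (fun x => v x k) t x) s z.1 * z.2 s)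
      + (l * c z.1 * (v z.1 j * pd (fun x => v x i) t z.1)) * (pd (fun x => π x k t) s z.1 * z.2 s)
      + (l * c z.1 * (v z.1 j * π z.1 k t)) * (pd (fun x => pd (fun x => v x i) t x) s z.1 * z.2 s)
      + (-(l * c z.1 * (v z.1 k * v z.1 t))) * (pd (fun x => pd (fun x => π x i j) t x) s z.1 * z.2 s)
      + (-(l * c z.1 * (v z.1 k * pd (fun x => π x i j) t z.1))) * (pd (fun x => v x t) s z.1 * z.2 s)
      + (-(l * c z.1 * (v z.1 k * pd (fun x => v x i) t z.1))) * (pd (fun x => π x j t) s z.1 * z.2 s)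
      + (-(l * c z.1 * (v z.1 k * π z.1 j t))) * (pd (fun x => pd (fun x => v x i) t x) s z.1 * z.2 s)
      + (l * c z.1 * (v z.1 k * pd (fun x => v x j) t z.1)) * (pd (fun x => π x i t) s z.1 * z.2 s)
      + (l * c z.1 * (v z.1 k * π z.1 i t)) * (pd (fun x => pd (fun x => v x j) t x) s z.1 * z.2 s)
      + (l * (v z.1 k * (π z.1 i t * pd c t z.1))) * (pd (fun x => v x j) s z.1 * z.2 s)
      + (-(l * (v z.1 j * (π z.1 i t * pd c t z.1)))) * (pd (fun x => v x k) s z.1 * z.2 s)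
      + (l * (v z.1 i * (π z.1 j t * pd c t z.1))) * (pd (fun x => v x k) s z.1 * z.2 s)
      + (-(l * (v z.1 k * (π z.1 j t * pd c t z.1)))) * (pd (fun x => v x i) s z.1 * z.2 s)
      + (l * (v z.1 j * (π z.1 k t * pd c t z.1))) * (pd (fun x => v x i) s z.1 * z.2 s)
      + (-(l * (v z.1 i * (π z.1 k t * pd c t z.1)))) * (pd (fun x => v x j) s z.1 * z.2 s)))
  · refine Finset.sum_congr rfl fun t _ => ?_
    simp only [Finset.sum_add_distrib, ← Finset.mul_sum]
    ring
  · rw [Finset.sum_comm]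
    refine Finset.sum_eq_zero fun s _ => ?_
    trans (∑ t, (z.2 s * (pd (fun x => π x i t) s z.1 * pd (fun x => π x j k) t z.1
      + π z.1 i t * pd (fun x => pd (fun x => π x j k) t x) s z.1
      + (pd (fun x => π x j t) s z.1 * pd (fun x => π x k i) t z.1
        + π z.1 j t * pd (fun x => pd (fun x => π x k i) t x) s z.1)
      + (pd (fun x => π x k t) s z.1 * pd (fun x => π x i j) t z.1
        + π z.1 k t * pd (fun x => pd (fun x => π x i j) t x) s z.1))
      + ((l * c z.1) * (pd (fun x => v x i) s z.1 * z.2 s)) * (pd (fun x => π x j k) t z.1 * v z.1 t + π z.1 k t * pd (fun x => v x j) t z.1 - π z.1 j t * pd (fun x => v x k) t z.1)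
      + ((l * c z.1) * (pd (fun x => v x j) s z.1 * z.2 s)) * (pd (fun x => π x k i) t z.1 * v z.1 t + π z.1 i t * pd (fun x => v x k) t z.1 - π z.1 k t * pd (fun x => v x i) t z.1)
      + ((l * c z.1) * (pd (fun x => v x k) s z.1 * z.2 s)) * (pd (fun x => π x i j) t z.1 * v z.1 t + π z.1 j t * pd (fun x => v x i) t z.1 - π z.1 i t * pd (fun x => v x j) t z.1)
      + (-((l * c z.1) * (v z.1 i * z.2 s))) * (pd (fun x => pd (fun x => π x j k) t x) s z.1 * v z.1 t
        + pd (fun x => π x j k) t z.1 * pd (fun x => v x t) s z.1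
        + (pd (fun x => π x k t) s z.1 * pd (fun x => v x j) t z.1
          + π z.1 k t * pd (fun x => pd (fun x => v x j) t x) s z.1)
        - (pd (fun x => π x j t) s z.1 * pd (fun x => v x k) t z.1
          + π z.1 j t * pd (fun x => pd (fun x => v x k) t x) s z.1))
      + (-((l * c z.1) * (v z.1 j * z.2 s))) * (pd (fun x => pd (fun x => π x k i) t x) s z.1 * v z.1 t
        + pd (fun x => π x k i) t z.1 * pd (fun x => v x t) s z.1
        + (pd (fun x => π x i t) s z.1 * pd (fun x => v x k) t z.1
          + π z.1 i t * pd (fun x => pd (fun x => v x k) t x) s z.1)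
        - (pd (fun x => π x k t) s z.1 * pd (fun x => v x i) t z.1
          + π z.1 k t * pd (fun x => pd (fun x => v x i) t x) s z.1))
      + (-((l * c z.1) * (v z.1 k * z.2 s))) * (pd (fun x => pd (fun x => π x i j) t x) s z.1 * v z.1 t
        + pd (fun x => π x i j) t z.1 * pd (fun x => v x t) s z.1
        + (pd (fun x => π x j t) s z.1 * pd (fun x => v x i) t z.1
          + π z.1 j t * pd (fun x => pd (fun x => v x i) t x) s z.1)
        - (pd (fun x => π x i t) s z.1 * pd (fun x => v x j) t z.1
          + π z.1 i t * pd (fun x => pd (fun x => v x j) t x) s z.1))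
      + (l * (pd (fun x => v x j) s z.1 * z.2 s * v z.1 k - pd (fun x => v x k) s z.1 * z.2 s * v z.1 j)) * (pd c t z.1 * π z.1 i t)
      + (l * (pd (fun x => v x k) s z.1 * z.2 s * v z.1 i - pd (fun x => v x i) s z.1 * z.2 s * v z.1 k)) * (pd c t z.1 * π z.1 j t)
      + (l * (pd (fun x => v x i) s z.1 * z.2 s * v z.1 j - pd (fun x => v x j) s z.1 * z.2 s * v z.1 i)) * (pd c t z.1 * π z.1 k t)))
    · exact Finset.sum_congr rfl fun t _ => by ring
    · have e1 := hJp z.1 i j k s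
      have e2 := heV1 z.1 j k
      have e3 := heV1 z.1 k i
      have e4 := heV1 z.1 i j
      have f1 := heVp z.1 j k s
      have f2 := heVp z.1 k i s
      have f3 := heVp z.1 i j s
      have g1 := heC1 z.1 i
      have g2 := heC1 z.1 j
      have g3 := heC1 z.1 k
      simp only [Finset.sum_add_distrib, Finset.sum_sub_distrib, ← Finset.mul_sum]
        at e1 e2 e3 e4 f1 f2 f3 g1 g2 g3 ⊢
      linear_combination z.2 s * e1
        + (l * c z.1 * (pd (fun x => v x i) s z.1 * z.2 s)) * e2
        + (l * c z.1 * (pd (fun x => v x j) s z.1 * z.2 s)) * e3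
        + (l * c z.1 * (pd (fun x => v x k) s z.1 * z.2 s)) * e4
        - (l * c z.1 * (v z.1 i * z.2 s)) * f1
        - (l * c z.1 * (v z.1 j * z.2 s)) * f2
        - (l * c z.1 * (v z.1 k * z.2 s)) * f3
        + (l * (pd (fun x => v x j) s z.1 * z.2 s * v z.1 k
            - pd (fun x => v x k) s z.1 * z.2 s * v z.1 j)) * g1
        + (l * (pd (fun x => v x k) s z.1 * z.2 s * v z.1 i
            - pd (fun x => v x i) s z.1 * z.2 s * v z.1 k)) * g2
        + (l * (pd (fun x => v x i) s z.1 * z.2 s * v z.1 j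
            - pd (fun x => v x j) s z.1 * z.2 s * v z.1 i)) * g3
/-- `π_TM + λ c (v_C ∧ v_V)` is a Poisson tensor on `ℝ^N × ℝ^N`. -/
theorem deformation_liftC_liftV_is_poisson {N : ℕ}
    (π : (Fin N → ℝ) → Matrix (Fin N) (Fin N) ℝ) (c : (Fin N → ℝ) → ℝ)
    (v : (Fin N → ℝ) → Fin N → ℝ) (l : ℝ)
    (hπ : IsPoisson π) (hc : IsCasimir π c) (hv : IsPoissonVF π v) :
    IsPoissonT (fun z => tlift π z + (l * c z.1) • wedge (liftC v) (liftV v) z) := by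
  obtain ⟨hπs, hA, hJ⟩ := hπ
  obtain ⟨hcs, hC⟩ := hc
  obtain ⟨hvs, hV⟩ := hv
  have heV1 := rel_eV1 hA hV
  have heC1 := rel_eC1 (c := c) hA hC
  have hJp := rel_Jp hπs hJ
  have heVp := rel_Vp hπs hvs heV1
  have hApd := antisym_pd (π := π) hA
  refine ⟨?_, ?_, ?_⟩
  · -- smoothness of entries
    intro a b
    beta_reduce
    rcases a with i | i <;> rcases b with j | j
    · rw [show (fun z => (tlift π z + (l * c z.1) • wedge (liftC v) (liftV v) z)
          (Sum.inl i) (Sum.inl j)) = (fun _ => (0:ℝ)) from funext fun z => entryLL π c v l z i j]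
      exact contDiff_const
    · rw [show (fun z => (tlift π z + (l * c z.1) • wedge (liftC v) (liftV v) z)
          (Sum.inl i) (Sum.inr j))
          = (fun z : (Fin N → ℝ) × (Fin N → ℝ) =>
              π z.1 i j + l * c z.1 * (v z.1 i * v z.1 j))
          from funext fun z => entryLR π c v l z i j]
      exact (smooth_fq (hπs i j)).add ((contDiff_const.mul (smooth_fq hcs)).mul
        ((smooth_fq (hvs i)).mul (smooth_fq (hvs j))))
    · rw [show (fun z => (tlift π z + (l * c z.1) • wedge (liftC v) (liftV v) z)
          (Sum.inr i) (Sum.inl j))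
          = (fun z : (Fin N → ℝ) × (Fin N → ℝ) =>
              π z.1 i j - l * c z.1 * (v z.1 i * v z.1 j))
          from funext fun z => entryRL π c v l z i j]
      exact (smooth_fq (hπs i j)).sub ((contDiff_const.mul (smooth_fq hcs)).mul
        ((smooth_fq (hvs i)).mul (smooth_fq (hvs j))))
    · rw [show (fun z => (tlift π z + (l * c z.1) • wedge (liftC v) (liftV v) z)
          (Sum.inr i) (Sum.inr j))
          = (fun z : (Fin N → ℝ) × (Fin N → ℝ) =>
              (∑ s, pd (fun x => π x i j) s z.1 * z.2 s)
              + l * c z.1 * ((∑ s, pd (fun x => v x i) s z.1 * z.2 s) * v z.1 j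
                  - (∑ s, pd (fun x => v x j) s z.1 * z.2 s) * v z.1 i))
          from funext fun z => entryRR π c v l z i j]
      refine ContDiff.add (ContDiff.sum fun s _ =>
          (smooth_fq (pd_smooth (hπs i j) s)).mul (smooth_coord s)) ?_
      refine (contDiff_const.mul (smooth_fq hcs)).mul (ContDiff.sub ?_ ?_)
      · exact (ContDiff.sum fun s _ =>
          (smooth_fq (pd_smooth (hvs i) s)).mul (smooth_coord s)).mul (smooth_fq (hvs j))
      · exact (ContDiff.sum fun s _ =>
          (smooth_fq (pd_smooth (hvs j) s)).mul (smooth_coord s)).mul (smooth_fq (hvs i))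
  · -- antisymmetry
    intro z a b
    beta_reduce
    rcases a with i | i <;> rcases b with j | j
    · rw [entryLL π c v l z j i, entryLL π c v l z i j]; ring
    · rw [entryRL π c v l z j i, entryLR π c v l z i j]
      linear_combination hA z.1 i j
    · rw [entryLR π c v l z j i, entryRL π c v l z i j]
      linear_combination hA z.1 i j
    · rw [entryRR π c v l z j i, entryRR π c v l z i j]
      have hs : ∑ s, pd (fun x => π x j i) s z.1 * z.2 s
          = -∑ s, pd (fun x => π x i j) s z.1 * z.2 s := by
        rw [← Finset.sum_neg_distrib]
        exact Finset.sum_congr rfl fun s _ => by rw [hApd i j s z.1]; ring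
      rw [hs]; ring
  · -- Jacobi identity
    intro z a b cc
    beta_reduce
    rcases a with i | i <;> rcases b with j | j <;> rcases cc with k | k
    · simp only [dLL hπs hcs hvs, mul_zero, add_zero, Finset.sum_const_zero]
    · rw [Fintype.sum_sum_type]
      simp only [dLL hπs hcs hvs, dLR_inr hπs hcs hvs, dRL_inr hπs hcs hvs, entryLL, pdT_const,
        zero_mul, mul_zero, add_zero, zero_add, Finset.sum_const_zero]
    · rw [Fintype.sum_sum_type]
      simp only [dLL hπs hcs hvs, dLR_inr hπs hcs hvs, dRL_inr hπs hcs hvs, entryLL, pdT_const,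
        zero_mul, mul_zero, add_zero, zero_add, Finset.sum_const_zero]
    · exact case3 hπs hcs hvs hJ heV1 heC1 z i j k
    · rw [Fintype.sum_sum_type]
      simp only [dLL hπs hcs hvs, dLR_inr hπs hcs hvs, dRL_inr hπs hcs hvs, entryLL, pdT_const,
        zero_mul, mul_zero, add_zero, zero_add, Finset.sum_const_zero]
    · refine Eq.trans ?_ (case3 (l := l) hπs hcs hvs hJ heV1 heC1 z j k i)
      exact Finset.sum_congr rfl fun s _ => by ring
    · refine Eq.trans ?_ (case3 (l := l) hπs hcs hvs hJ heV1 heC1 z k i j)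
      exact Finset.sum_congr rfl fun s _ => by ring
    · exact case4 hπs hcs hvs hJ heV1 heC1 hJp heVp z i j k
end
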